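/- Let T be a torus, Q a finite group acting on T by continuous automorphisms, and G = T ⋊ Q. Let n = |Q| and let P denote the set of products ⁅q₁,t₁⁆⋯⁅qₙ,tₙ⁆ with qᵢ ∈ Q, tᵢ ∈ T, and with t₁, …, t_{n−1} elements of finite order in T. Then P is a dense subset of the identity component of the commutator subgroup of G. -/

import Mathlib

/-- A topological group is a (topological) torus if it is isomorphic, as a topological group,
to `(ℝ/ℤ)ⁿ` for some `n`. -/
def IsTopologicalTorus (T : Type*) [TopologicalSpace T] [Group T] : Prop :=
  ∃ (n : ℕ) (e : T ≃* Multiplicative (Fin n → AddCircle (1 : ℝ))),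
    Continuous e ∧ Continuous e.symm

/-- The topology on a semidirect product `N ⋊[φ] Q` of topological groups: the one induced
from the product topology via the canonical identification with `N × Q`. -/
instance SemidirectProduct.topologicalSpace {N Q : Type*} [Group N] [TopologicalSpace N]
    [Group Q] [TopologicalSpace Q] (φ : Q →* MulAut N) : TopologicalSpace (N ⋊[φ] Q) :=
  TopologicalSpace.induced (fun g => (g.left, g.right)) inferInstance

/-!
Since `T` is abelian, `(inr q)⁻¹ (inl t)⁻¹ (inr q) (inl t) = inl (φ q⁻¹ t⁻¹ * t)`, so for fixed
`qs` the products in `P` are values of a continuous homomorphism `Tⁿ → T`; its image is connected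
and contains `1`, hence lies in the identity component. Conversely, `Q` acts trivially on `T ⧸ W`,
where `W` is generated by all `φ q⁻¹ t⁻¹ * t`, so `g ↦ g.left mod W` is a homomorphism to an
abelian group and kills `[G, G]`. An element of the identity component has trivial `Q`-part
because `Q` is discrete, so it is `inl w` with `w ∈ W`, i.e. a value of the homomorphism above
for an enumeration `qs` of `Q`. Torsion points are dense in `Tⁿ`, and the images of torsion
points lie in `P`.
-/

theorem AddCircle.dense_setOf_isOfFinAddOrder {p : ℝ} [hp : Fact (0 < p)] :
    Dense {u : AddCircle p | IsOfFinAddOrder u} := by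
  rw [← QuotientAddGroup.dense_preimage_mk]
  have hdense : DenseRange fun q : ℚ => (q : ℝ) * p :=
    (Homeomorph.mulRight₀ p hp.out.ne').surjective.denseRange.comp Rat.denseRange_cast
      (continuous_mul_const p)
  refine hdense.mono ?_
  rintro _ ⟨q, rfl⟩
  rw [Set.mem_preimage, Set.mem_ofPred_eq, ← addOrderOf_pos_iff]
  exact (AddCircle.addOrderOf_coe_rat (p := p)).symm ▸ q.pos

namespace IsTopologicalTorus

variable {T : Type*} [Group T] [TopologicalSpace T]

protected theorem mul_comm (hT : IsTopologicalTorus T) (a b : T) : a * b = b * a := by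
  obtain ⟨n, e, -, -⟩ := hT
  exact e.injective (by rw [map_mul, map_mul, mul_comm])

theorem connectedSpace (hT : IsTopologicalTorus T) : ConnectedSpace T := by
  obtain ⟨n, e, -, he'⟩ := hT
  have : ConnectedSpace (Multiplicative (Fin n → AddCircle (1 : ℝ))) :=
    inferInstanceAs (ConnectedSpace (Fin n → AddCircle (1 : ℝ)))
  exact e.symm.surjective.connectedSpace he'

theorem dense_setOf_isOfFinOrder (hT : IsTopologicalTorus T) : Dense {t : T | IsOfFinOrder t} := by
  obtain ⟨n, e, he, he'⟩ := hT
  have hdense : Dense {x : Multiplicative (Fin n → AddCircle (1 : ℝ)) | IsOfFinOrder x} :=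
    (dense_pi Set.univ fun _ _ => AddCircle.dense_setOf_isOfFinAddOrder).mono fun x hx =>
      isOfFinOrder_ofAdd_iff.2 (.pi (Set.mem_univ_pi.1 hx))
  convert hdense.preimage (Homeomorph.mk e.toEquiv he he').isOpenMap using 1
  ext t
  exact (e.injective.isOfFinOrder_iff (f := e.toMonoidHom)).symm

end IsTopologicalTorus

namespace SemidirectProduct

section Algebra

variable {T Q : Type*} [CommGroup T] [Group Q] (φ : Q →* MulAut T)

def commutatorHom (q : Q) : T →* T where
  toFun t := φ q⁻¹ t⁻¹ * t
  map_one' := by simp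
  map_mul' a b := by simp only [mul_inv, map_mul]; exact mul_mul_mul_comm _ _ _ _

@[simp]
theorem commutatorHom_apply (q : Q) (t : T) : commutatorHom φ q t = φ q⁻¹ t⁻¹ * t := rfl

theorem inl_commutatorHom (q : Q) (t : T) :
    (inl (commutatorHom φ q t) : T ⋊[φ] Q) = (inr q)⁻¹ * (inl t)⁻¹ * inr q * inl t := by
  ext <;> simp

theorem inl_commutatorHom_mem_commutator (q : Q) (t : T) :
    (inl (commutatorHom φ q t) : T ⋊[φ] Q) ∈ commutator (T ⋊[φ] Q) := by
  rw [inl_commutatorHom, commutator_eq_closure]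
  exact Subgroup.subset_closure
    ⟨(inr q)⁻¹, (inl t)⁻¹, by simp only [commutatorElement_def, inv_inv]⟩

def commutatorProd {ι : Type*} [Fintype ι] (qs : ι → Q) : (ι → T) →* T :=
  ∏ i, (commutatorHom φ (qs i)).comp (Pi.evalMonoidHom (fun _ => T) i)

theorem commutatorProd_apply {ι : Type*} [Fintype ι] (qs : ι → Q) (ts : ι → T) :
    commutatorProd φ qs ts = ∏ i, commutatorHom φ (qs i) (ts i) := by
  simp [commutatorProd]

theorem list_prod_ofFn_eq_inl_commutatorProd {n : ℕ} (qs : Fin n → Q) (ts : Fin n → T) :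
    (List.ofFn fun i => (inr (qs i) : T ⋊[φ] Q)⁻¹ * (inl (ts i))⁻¹ * inr (qs i) * inl (ts i)).prod
      = inl (commutatorProd φ qs ts) := by
  simp only [← inl_commutatorHom]
  rw [commutatorProd_apply, ← List.prod_ofFn, map_list_prod, List.map_ofFn]
  rfl

theorem inl_commutatorProd_mem_commutator {ι : Type*} [Fintype ι] (qs : ι → Q) (ts : ι → T) :
    (inl (commutatorProd φ qs ts) : T ⋊[φ] Q) ∈ commutator (T ⋊[φ] Q) := by
  rw [← Subgroup.mem_comap, commutatorProd_apply]
  exact Subgroup.prod_mem _ fun i _ => inl_commutatorHom_mem_commutator φ (qs i) (ts i)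

theorem commutatorHom_mem_range_commutatorProd {ι : Type*} [Fintype ι] [DecidableEq ι]
    {qs : ι → Q} (hqs : Function.Surjective qs) (q : Q) (t : T) :
    commutatorHom φ q t ∈ (commutatorProd φ qs).range := by
  obtain ⟨i, rfl⟩ := hqs q
  refine ⟨Pi.mulSingle i t, ?_⟩
  rw [commutatorProd_apply, Fintype.prod_eq_single i fun j hj => by simp [hj]]
  simp

def leftQuotientHom (W : Subgroup T) (hW : ∀ q t, commutatorHom φ q t ∈ W) : T ⋊[φ] Q →* T ⧸ W where
  toFun g := g.left
  map_one' := by simp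
  map_mul' g h := by
    rw [mul_left, QuotientGroup.mk_mul, mul_right_inj, QuotientGroup.eq]
    simpa using hW g.right⁻¹ h.left

theorem left_mem_of_mem_commutator (W : Subgroup T) (hW : ∀ q t, commutatorHom φ q t ∈ W)
    {g : T ⋊[φ] Q} (hg : g ∈ commutator (T ⋊[φ] Q)) : g.left ∈ W :=
  (QuotientGroup.eq_one_iff _).1 (Abelianization.commutator_subset_ker (leftQuotientHom φ W hW) hg)

theorem exists_eq_inl_commutatorProd {ι : Type*} [Fintype ι] [DecidableEq ι] {qs : ι → Q}
    (hqs : Function.Surjective qs) {g : T ⋊[φ] Q} (hg : g ∈ commutator (T ⋊[φ] Q))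
    (hg1 : g.right = 1) : ∃ ts, g = inl (commutatorProd φ qs ts) := by
  obtain ⟨ts, hts⟩ :=
    left_mem_of_mem_commutator φ _ (commutatorHom_mem_range_commutatorProd φ hqs) hg
  refine ⟨ts, ?_⟩
  ext <;> simp [hts, hg1]

end Algebra

section Topology

variable {N H : Type*} [Group N] [Group H] [TopologicalSpace N] [TopologicalSpace H]
  (φ : H →* MulAut N)

theorem continuous_inl : Continuous (inl : N → N ⋊[φ] H) :=
  continuous_induced_rng.2 (continuous_id.prodMk continuous_const)

theorem continuous_right : Continuous (right : N ⋊[φ] H → H) :=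
  continuous_snd.comp (continuous_induced_dom : Continuous fun g : N ⋊[φ] H => (g.left, g.right))

theorem right_eq_one_of_mem_connectedComponent [TotallyDisconnectedSpace H]
    {S : Subgroup (N ⋊[φ] H)} {g : S} (hg : g ∈ connectedComponent 1) : (g : N ⋊[φ] H).right = 1 :=
  (isPreconnected_connectedComponent.image _
    ((continuous_right φ).comp continuous_subtype_val).continuousOn).subsingleton
    ⟨g, hg, rfl⟩ ⟨1, mem_connectedComponent, rfl⟩

end Topology

section TopologyComm

variable {T Q : Type*} [CommGroup T] [Group Q] [TopologicalSpace T] [IsTopologicalGroup T]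
  {φ : Q →* MulAut T}

theorem continuous_commutatorProd (hφ : ∀ q, Continuous (φ q)) {ι : Type*} [Fintype ι]
    (qs : ι → Q) : Continuous (commutatorProd φ qs) := by
  simp only [funext (commutatorProd_apply φ qs), commutatorHom_apply]
  fun_prop

theorem inl_commutatorProd_mem_image_connectedComponent [TopologicalSpace Q] [ConnectedSpace T]
    (hφ : ∀ q, Continuous (φ q)) {ι : Type*} [Fintype ι] (qs : ι → Q) (ts : ι → T) :
    inl (commutatorProd φ qs ts) ∈
      Subtype.val '' connectedComponent (1 : commutator (T ⋊[φ] Q)) := by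
  let F : (ι → T) → commutator (T ⋊[φ] Q) :=
    fun us => ⟨inl (commutatorProd φ qs us), inl_commutatorProd_mem_commutator φ qs us⟩
  have hF : Continuous F :=
    ((continuous_inl φ).comp (continuous_commutatorProd hφ qs)).subtype_mk _
  have hF1 : F 1 = 1 := Subtype.ext <| by simp [F]
  refine ⟨F ts, ?_, rfl⟩
  rw [← hF1]
  refine hF.image_connectedComponent_subset 1 ⟨ts, ?_, rfl⟩
  simp [PreconnectedSpace.connectedComponent_eq_univ]

end TopologyComm

end SemidirectProduct

open SemidirectProduct in
/-- In `G = T ⋊ Q` with `T` a torus and `Q` finite acting continuously, with `n = |Q|`, the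
set `P` of products `⁅q₁,t₁⁆⋯⁅qₙ,tₙ⁆` (where `⁅g,h⁆ = g⁻¹h⁻¹gh`) in which `t₁,…,t_{n-1}` are
torsion elements of `T` is a dense subset of the identity component of the commutator
subgroup of `G`. -/
theorem torsion_commutator_products_dense_in_identityComponent
    {T : Type*} [Group T] [TopologicalSpace T] [IsTopologicalGroup T]
    (hT : IsTopologicalTorus T)
    {Q : Type*} [Group Q] [Fintype Q] [TopologicalSpace Q] [DiscreteTopology Q]
    (φ : Q →* MulAut T) (hφ : ∀ q : Q, Continuous (φ q))
    (P : Set (T ⋊[φ] Q))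
    (hP : P = {x : T ⋊[φ] Q | ∃ (qs : Fin (Fintype.card Q) → Q) (ts : Fin (Fintype.card Q) → T),
      (∀ i : Fin (Fintype.card Q), (i : ℕ) < Fintype.card Q - 1 → IsOfFinOrder (ts i)) ∧
      x = (List.ofFn fun i =>
        ((inr (qs i) : T ⋊[φ] Q)⁻¹ * (inl (ts i))⁻¹ * inr (qs i) * inl (ts i))).prod}) :
    P ⊆ Subtype.val '' connectedComponent (1 : commutator (T ⋊[φ] Q)) ∧
      Subtype.val '' connectedComponent (1 : commutator (T ⋊[φ] Q)) ⊆ closure P := by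
  let : CommGroup T := { ‹Group T› with mul_comm := hT.mul_comm }
  have := hT.connectedSpace
  simp only [list_prod_ofFn_eq_inl_commutatorProd] at hP
  subst hP
  refine ⟨?_, ?_⟩
  · rintro _ ⟨qs, ts, -, rfl⟩
    exact inl_commutatorProd_mem_image_connectedComponent hφ qs ts
  · rintro _ ⟨y, hy, rfl⟩
    let qs := (Fintype.equivFin Q).symm
    obtain ⟨ts, hts⟩ := exists_eq_inl_commutatorProd φ qs.surjective y.2
      (right_eq_one_of_mem_connectedComponent φ hy)
    have htorsion := dense_pi Set.univ fun (_ : Fin (Fintype.card Q)) _ =>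
      hT.dense_setOf_isOfFinOrder
    refine closure_mono ?_ (((continuous_inl φ).comp (continuous_commutatorProd hφ qs)
      ).range_subset_closure_image_dense htorsion ⟨ts, hts.symm⟩)
    rintro _ ⟨us, hus, rfl⟩
    exact ⟨qs, us, fun i _ => hus i trivial, rfl⟩
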